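/- arXiv:2103.10414 — 4 statements merged into one kernel-verified Lean document; each statement's English description precedes it below -/
import Mathlib

section
/- Let T be a tournament on n ≥ 2^{k−1} vertices. Then T contains a transitive subtournament on k vertices; moreover, more than a 1/2^{k²} fraction of the k-element subsets of V(T) induce transitive subtournaments. -/
/-!
Every tournament on at least `2 ^ j` vertices has a transitive subtournament on `j + 1`
vertices: pick a vertex `v`; its out- or its in-neighbourhood has at least `2 ^ (j - 1)`
vertices and so, inductively, contains a transitive set of size `j`, which stays transitive
with `v` added as its source or its sink.

Applied to every `m`-subset of the vertices, `m = 2 ^ (k - 1)`, this gives a transitive `k`-set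
in each of them. A `k`-set lies in `C(n - k, m - k)` of the `m`-sets, so double counting gives at
least `C(n, m) / C(n - k, m - k) = C(n, k) / C(m, k)` transitive `k`-sets, and
`C(m, k) ≤ m ^ k = 2 ^ (k² - k) < 2 ^ k²`.
-/

/-- `T` is a tournament relation: irreflexive, with exactly one directed edge
between any two distinct vertices. -/
def IsTournament {V : Type*} (T : V → V → Prop) : Prop :=
  (∀ v, ¬ T v v) ∧ ∀ u v : V, u ≠ v → (T u v ↔ ¬ T v u)

/-- The set `S` induces a transitive subtournament of `T`. -/
def TransOn {V : Type*} (T : V → V → Prop) (S : Finset V) : Prop :=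
  ∀ a ∈ S, ∀ b ∈ S, ∀ c ∈ S, T a b → T b c → T a c

open Finset

section Tournament

variable {V : Type*} {T : V → V → Prop}

theorem IsTournament.asymm (hT : IsTournament T) (a b : V) (hab : T a b) : ¬ T b a := by
  rcases eq_or_ne a b with rfl | hne
  · exact absurd hab (hT.1 a)
  · exact (hT.2 a b hne).1 hab

theorem transOn_flip_iff {S : Finset V} : TransOn (flip T) S ↔ TransOn T S :=
  ⟨fun h a ha b hb c hc hab hbc => h c hc b hb a ha hbc hab,
    fun h a ha b hb c hc hab hbc => h c hc b hb a ha hbc hab⟩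

theorem TransOn.insert_of_forall_rel [DecidableEq V] (hasymm : ∀ a b, T a b → ¬ T b a)
    {S : Finset V} {v : V} (hS : TransOn T S) (hv : ∀ u ∈ S, T v u) :
    TransOn T (insert v S) := by
  intro a ha b hb c hc hab hbc
  rw [mem_insert] at ha hb hc
  rcases hb with rfl | hb
  · rcases ha with rfl | ha
    · exact absurd hab (fun h => hasymm _ _ h h)
    · exact absurd (hv a ha) (hasymm _ _ hab)
  rcases hc with rfl | hc
  · exact absurd (hv b hb) (hasymm _ _ hbc)
  rcases ha with rfl | ha
  · exact hv c hc
  · exact hS a ha b hb c hc hab hbc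

theorem TransOn.insert_of_forall_rel' [DecidableEq V] (hasymm : ∀ a b, T a b → ¬ T b a)
    {S : Finset V} {v : V} (hS : TransOn T S) (hv : ∀ u ∈ S, T u v) :
    TransOn T (insert v S) :=
  transOn_flip_iff.1 <|
    (transOn_flip_iff.2 hS).insert_of_forall_rel (fun a b h => hasymm b a h) hv

theorem IsTournament.exists_subset_erase_forall_rel [DecidableEq V] (hT : IsTournament T)
    {B : Finset V} {v : V} (hv : v ∈ B) :
    ∃ A ⊆ B.erase v, #B ≤ 2 * #A + 1 ∧ ((∀ u ∈ A, T v u) ∨ (∀ u ∈ A, T u v)) := by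
  classical
  have hsplit : #((B.erase v).filter (T v ·)) + #((B.erase v).filter (¬ T v ·)) = #B - 1 := by
    rw [card_filter_add_card_filter_not, card_erase_of_mem hv]
  have hB : 0 < #B := card_pos.2 ⟨v, hv⟩
  by_cases hout : #((B.erase v).filter (¬ T v ·)) ≤ #((B.erase v).filter (T v ·))
  · exact ⟨(B.erase v).filter (T v ·), filter_subset _ _, by omega,
      .inl fun u hu => (mem_filter.1 hu).2⟩
  · refine ⟨(B.erase v).filter (¬ T v ·), filter_subset _ _, by omega, .inr fun u hu => ?_⟩
    obtain ⟨hu, hnot⟩ := mem_filter.1 hu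
    exact (hT.2 u v (ne_of_mem_erase hu)).2 hnot

theorem IsTournament.exists_transOn_subset [DecidableEq V] (hT : IsTournament T) (j : ℕ)
    {B : Finset V} (hB : 2 ^ j ≤ #B) : ∃ S ⊆ B, #S = j + 1 ∧ TransOn T S := by
  induction j generalizing B with
  | zero =>
    obtain ⟨v, hv⟩ := card_pos.1 (by omega : 0 < #B)
    refine ⟨{v}, singleton_subset_iff.2 hv, card_singleton v, ?_⟩
    intro a ha b hb _ _ hab _
    rw [mem_singleton] at ha hb
    rw [ha, hb] at hab
    exact absurd hab (hT.1 v)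
  | succ j ih =>
    obtain ⟨v, hv⟩ := card_pos.1 (hB.trans_lt' (by positivity))
    obtain ⟨A, hAB, hAcard, hvA⟩ := hT.exists_subset_erase_forall_rel hv
    obtain ⟨S, hSA, hScard, hS⟩ := ih (B := A) (by rw [pow_succ] at hB; omega)
    have hvS : v ∉ S := fun h => notMem_erase v B (hAB (hSA h))
    refine ⟨insert v S, insert_subset hv ((hSA.trans hAB).trans (erase_subset v B)), ?_, ?_⟩
    · rw [card_insert_of_notMem hvS, hScard]
    · rcases hvA with hvA | hvA
      · exact hS.insert_of_forall_rel hT.asymm fun u hu => hvA u (hSA hu)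
      · exact hS.insert_of_forall_rel' hT.asymm fun u hu => hvA u (hSA hu)

end Tournament

theorem choose_le_card_mul_choose_of_forall_exists_subset {α : Type*} [Fintype α]
    {F : Finset (Finset α)} {k m : ℕ} (hF : ∀ A ∈ F, #A = k) (hkm : k ≤ m)
    (hm : m ≤ Fintype.card α) (hcover : ∀ B : Finset α, #B = m → ∃ A ∈ F, A ⊆ B) :
    (Fintype.card α).choose k ≤ #F * m.choose k := by
  classical
  set n := Fintype.card α
  have hbelow : ∀ B ∈ (univ : Finset α).powersetCard m,
      1 ≤ #(F.bipartiteAbove (fun B A => A ⊆ B) B) := by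
    intro B hB
    obtain ⟨A, hAF, hAB⟩ := hcover B (mem_powersetCard.1 hB).2
    exact card_pos.2 ⟨A, mem_filter.2 ⟨hAF, hAB⟩⟩
  have habove : ∀ A ∈ F,
      #(((univ : Finset α).powersetCard m).bipartiteBelow (fun B A => A ⊆ B) A)
        ≤ (n - k).choose (m - k) := by
    intro A hA
    rw [bipartiteBelow, card_filter_powersetCard_subset A univ m (subset_univ A)
      (hF A hA ▸ hkm), card_univ, hF A hA]
  have hcount : n.choose m ≤ #F * (n - k).choose (m - k) := by
    simpa [card_powersetCard] using card_mul_le_card_mul _ hbelow habove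
  have hpos : 0 < (n - k).choose (m - k) := Nat.choose_pos (by omega)
  refine Nat.le_of_mul_le_mul_right ?_ hpos
  calc n.choose k * (n - k).choose (m - k) = n.choose m * m.choose k := (Nat.choose_mul hkm).symm
    _ ≤ #F * (n - k).choose (m - k) * m.choose k := Nat.mul_le_mul_right _ hcount
    _ = #F * m.choose k * (n - k).choose (m - k) := by ring

theorem choose_two_pow_pred_lt_two_pow_sq {k : ℕ} (hk : 1 ≤ k) :
    (2 ^ (k - 1)).choose k < 2 ^ (k ^ 2) :=
  calc (2 ^ (k - 1)).choose k ≤ (2 ^ (k - 1)) ^ k := Nat.choose_le_pow _ k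
    _ = 2 ^ ((k - 1) * k) := (pow_mul 2 _ _).symm
    _ < 2 ^ (k ^ 2) := Nat.pow_lt_pow_right one_lt_two <|
        (sq k).symm ▸ Nat.mul_lt_mul_of_pos_right (by omega) (by omega)

theorem transitive_subtournaments_general {V : Type*} [Fintype V]
    (T : V → V → Prop) (hT : IsTournament T) (k : ℕ) (hk : 1 ≤ k)
    (hn : 2 ^ (k - 1) ≤ Fintype.card V) :
    (∃ S : Finset V, S.card = k ∧ TransOn T S) ∧
    ((Fintype.card V).choose k : ℝ) / 2 ^ (k ^ 2) <
      ({S : Finset V | S.card = k ∧ TransOn T S}.ncard : ℝ) := by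
  classical
  have hcover (B : Finset V) (hB : #B = 2 ^ (k - 1)) : ∃ S ⊆ B, #S = k ∧ TransOn T S := by
    obtain ⟨S, hSB, hS, hST⟩ := hT.exists_transOn_subset (k - 1) hB.ge
    exact ⟨S, hSB, by omega, hST⟩
  let F : Finset (Finset V) := {S | #S = k ∧ TransOn T S}
  have hF : {S : Finset V | S.card = k ∧ TransOn T S} = F := by ext; simp [F]
  have hexists : ∃ S : Finset V, #S = k ∧ TransOn T S := by
    obtain ⟨S, -, hS, hST⟩ := hT.exists_transOn_subset (k - 1) (B := univ) (by rwa [card_univ])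
    exact ⟨S, by omega, hST⟩
  have hkm : k ≤ 2 ^ (k - 1) := by
    have := Nat.lt_two_pow_self (n := k - 1)
    omega
  have hbound : (Fintype.card V).choose k ≤ #F * (2 ^ (k - 1)).choose k :=
    choose_le_card_mul_choose_of_forall_exists_subset (fun A hA => (mem_filter.1 hA).2.1) hkm hn
      fun B hB =>
        let ⟨S, hSB, hS⟩ := hcover B hB
        ⟨S, mem_filter.2 ⟨mem_univ S, hS⟩, hSB⟩
  have hFpos : 0 < #F :=
    let ⟨S, hS⟩ := hexists; card_pos.2 ⟨S, mem_filter.2 ⟨mem_univ S, hS⟩⟩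
  have hlt : (Fintype.card V).choose k < #F * 2 ^ (k ^ 2) :=
    hbound.trans_lt (Nat.mul_lt_mul_of_pos_left (choose_two_pow_pred_lt_two_pow_sq hk) hFpos)
  refine ⟨hexists, ?_⟩
  rw [hF, Set.ncard_coe_finset, div_lt_iff₀ (by positivity)]
  exact_mod_cast hlt

/-- a tournament on `n ≥ 2^{k-1}` vertices contains a transitive subtournament
on `k` vertices; moreover more than a `1/2^{k²}` fraction of its `k`-element vertex subsets
induce transitive subtournaments. -/
theorem transitive_subtournaments {V : Type*} [Fintype V] [DecidableEq V]
    (T : V → V → Prop) (hT : IsTournament T) (k : ℕ) (hk : 1 ≤ k)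
    (hn : 2 ^ (k - 1) ≤ Fintype.card V) :
    (∃ S : Finset V, S.card = k ∧ TransOn T S) ∧
    ((Fintype.card V).choose k : ℝ) / 2 ^ (k ^ 2) <
      ({S : Finset V | S.card = k ∧ TransOn T S}.ncard : ℝ) :=
  transitive_subtournaments_general T hT k hk hn
end

section
/- Let T be a δ-cut-dense tournament on n vertices with minimum semidegree δ⁰(T) ≥ n/4 − δn/16. Then every partition (X,Y) of V(T) satisfies e⃗(X,Y) ≥ (δ/16)|X||Y|. -/
/-- Out-degree of `v` in `T`. -/
def outDeg {V : Type*} [Fintype V] (T : V → V → Prop) [DecidableRel T] (v : V) : ℕ :=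
  (Finset.univ.filter fun u => T v u).card

/-- In-degree of `v` in `T`. -/
def inDeg {V : Type*} [Fintype V] (T : V → V → Prop) [DecidableRel T] (v : V) : ℕ :=
  (Finset.univ.filter fun u => T u v).card

/-- The minimum semidegree of `T` is at least `x`. -/
def MinSemidegGE {V : Type*} [Fintype V] (T : V → V → Prop) [DecidableRel T] (x : ℝ) : Prop :=
  ∀ v : V, x ≤ (outDeg T v : ℝ) ∧ x ≤ (inDeg T v : ℝ)

/-- Number of edges of `T` directed from `X` to `Y`. -/
def eDir {V : Type*} (T : V → V → Prop) [DecidableRel T] (X Y : Finset V) : ℕ :=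
  ((X ×ˢ Y).filter fun p => T p.1 p.2).card

/-- `T` is `δ`-cut-dense: every balanced partition `(X,Y)` of the vertex set satisfies
`e⃗(X,Y) ≥ δ|X||Y|`. -/
def CutDense {V : Type*} [Fintype V] [DecidableEq V] (T : V → V → Prop) [DecidableRel T]
    (δ : ℝ) : Prop :=
  ∀ X Y : Finset V, Disjoint X Y → X ∪ Y = Finset.univ →
    |(X.card : ℝ) - (Y.card : ℝ)| ≤ 1 →
    δ * X.card * Y.card ≤ (eDir T X Y : ℝ)

/-!
Assume `|X| ≤ |Y|`; otherwise reverse every edge. If `|X| ≤ n/2 - δn/4 + 1`, counting out-degrees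
gives `e⃗(X,Y) ≥ |X|(n/4 - δn/16) - |X|(|X|-1)/2 ≥ δn|X|/16`. Otherwise moving `S ⊆ Y` with
`|S| < δn/4 - 1` over to `X` balances the partition, so cut-density gives
`e⃗(X,Y) ≥ δ|X ∪ S||Y \ S| - |S||Y \ S| ≥ (n/2)(δn/4)`.
-/

open Finset

theorem IsTournament.asymm_s6 {V : Type*} {T : V → V → Prop} (hT : IsTournament T) {u v : V}
    (huv : T u v) : ¬ T v u := by
  rcases eq_or_ne u v with rfl | hne
  · exact hT.1 u
  · exact (hT.2 u v hne).1 huv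

section eDir

variable {V : Type*} {T : V → V → Prop} [DecidableRel T]

theorem eDir_le_card_mul_card (X Y : Finset V) : eDir T X Y ≤ #X * #Y :=
  (card_filter_le _ _).trans (card_product X Y).le

theorem eDir_mono_right (X : Finset V) {Y Y' : Finset V} (h : Y' ⊆ Y) :
    eDir T X Y' ≤ eDir T X Y :=
  card_le_card (filter_subset_filter _ (product_subset_product_right h))

theorem eDir_swap (X Y : Finset V) : eDir (fun a b => T b a) X Y = eDir T Y X := by
  unfold eDir
  apply card_nbij' Prod.swap Prod.swap <;> rintro ⟨a, b⟩ <;> simp [and_comm]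

theorem eDir_univ_right [Fintype V] (X : Finset V) :
    eDir T X univ = ∑ v ∈ X, outDeg T v := by
  unfold eDir outDeg
  rw [card_filter, sum_product]
  exact sum_congr rfl fun _ _ => (card_filter _ _).symm

variable [DecidableEq V]

theorem eDir_union_left {A B : Finset V} (Y : Finset V) (h : Disjoint A B) :
    eDir T (A ∪ B) Y = eDir T A Y + eDir T B Y := by
  unfold eDir
  rw [union_product, filter_union, card_union_of_disjoint]
  exact disjoint_filter_filter (disjoint_product.2 (Or.inl h))

theorem eDir_union_right (X : Finset V) {A B : Finset V} (h : Disjoint A B) :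
    eDir T X (A ∪ B) = eDir T X A + eDir T X B := by
  unfold eDir
  rw [product_union, filter_union, card_union_of_disjoint]
  exact disjoint_filter_filter (disjoint_product.2 (Or.inr h))

/-- In an oriented graph, the edges inside `X` and their reversals are disjoint sets of pairs
of distinct vertices. -/
theorem two_mul_eDir_self_le (hT : ∀ u v, T u v → ¬ T v u) (X : Finset V) :
    2 * eDir T X X ≤ #X * #X - #X := by
  rw [two_mul, ← offDiag_card]
  nth_rw 2 [← eDir_swap]
  unfold eDir
  rw [← card_union_of_disjoint
    (disjoint_filter.2 fun p _ h₁ h₂ => hT p.1 p.2 h₁ h₂), ← filter_or]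
  refine card_le_card fun p hp => ?_
  simp only [mem_filter, mem_product, mem_offDiag] at hp ⊢
  refine ⟨hp.1.1, hp.1.2, fun h => ?_⟩
  rcases hp.2 with h' | h' <;> rw [h] at h' <;> exact hT _ _ h' h'

end eDir

section CutDense

variable {V : Type*} [Fintype V] [DecidableEq V] {T : V → V → Prop} [DecidableRel T] {δ : ℝ}

theorem CutDense.swap (h : CutDense T δ) : CutDense (fun a b => T b a) δ := by
  intro X Y hd hu hbal
  rw [eDir_swap, mul_right_comm]
  exact h Y X hd.symm (by rwa [union_comm]) (by rwa [abs_sub_comm])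

/-- The witness is `t = ⌊(|Y| - |X|)/2⌋`: move `t` vertices `S ⊆ Y` over to `X` and use
`e⃗(X ∪ S, Y \ S) ≤ e⃗(X, Y) + |S| |Y \ S|`. -/
theorem CutDense.exists_le_eDir (hcut : CutDense T δ) {X Y : Finset V} (hd : Disjoint X Y)
    (hu : X ∪ Y = univ) (hle : #X ≤ #Y) :
    ∃ t : ℕ, (#Y : ℝ) ≤ #X + 2 * t + 1 ∧ (#X : ℝ) + 2 * t ≤ #Y ∧
      (δ * (#X + t) - t) * (#Y - t) ≤ eDir T X Y := by
  obtain ⟨S, hSY, hS⟩ := exists_subset_card_eq (show (#Y - #X) / 2 ≤ #Y by omega)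
  have hXS : Disjoint X S := hd.mono_right hSY
  have hX' : #(X ∪ S) = #X + #S := card_union_of_disjoint hXS
  have hY' : #(Y \ S) + #S = #Y := card_sdiff_add_card_eq_card hSY
  have hbal : |(#(X ∪ S) : ℝ) - #(Y \ S)| ≤ 1 := by
    have h₁ : #(X ∪ S) ≤ #(Y \ S) := by omega
    have h₂ : #(Y \ S) ≤ #(X ∪ S) + 1 := by omega
    have h₁' : (#(X ∪ S) : ℝ) ≤ #(Y \ S) := by exact_mod_cast h₁
    have h₂' : (#(Y \ S) : ℝ) ≤ #(X ∪ S) + 1 := by exact_mod_cast h₂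
    rw [abs_le]
    constructor <;> linarith
  have hcd := hcut (X ∪ S) (Y \ S) (disjoint_union_left.2 ⟨hd.mono_right sdiff_subset,
    sdiff_disjoint.symm⟩) (by rw [union_assoc, union_sdiff_of_subset hSY, hu]) hbal
  have hmove : eDir T (X ∪ S) (Y \ S) ≤ eDir T X Y + #S * #(Y \ S) := by
    rw [eDir_union_left _ hXS]
    exact add_le_add (eDir_mono_right _ sdiff_subset) (eDir_le_card_mul_card _ _)
  refine ⟨#S, by exact_mod_cast (by omega : #Y ≤ #X + 2 * #S + 1),
    by exact_mod_cast (by omega : #X + 2 * #S ≤ #Y), ?_⟩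
  have hmove' : (eDir T (X ∪ S) (Y \ S) : ℝ) ≤ eDir T X Y + #S * #(Y \ S) := by
    exact_mod_cast hmove
  have hY'' : (#(Y \ S) : ℝ) = #Y - #S := by rw [← hY']; push_cast; ring
  rw [hX', hY''] at hcd
  rw [hY''] at hmove'
  push_cast at hcd
  linarith

theorem CutDense.le_one (hcut : CutDense T δ) (hn : 2 ≤ Fintype.card V) : δ ≤ 1 := by
  obtain ⟨t, ht₁, ht₂, h⟩ := hcut.exists_le_eDir (X := ∅) (Y := univ) (disjoint_empty_left _)
    (empty_union _) (by simp)
  have hn' : (2 : ℝ) ≤ Fintype.card V := by exact_mod_cast hn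
  simp only [card_empty, card_univ, CharP.cast_eq_zero, zero_add] at ht₁ ht₂ h
  rw [show eDir T ∅ univ = 0 by simp [eDir], Nat.cast_zero] at h
  by_contra! hδ
  nlinarith [mul_pos (mul_pos (sub_pos.2 hδ) (by linarith : (0 : ℝ) < t))
    (by linarith : (0 : ℝ) < Fintype.card V - t)]

end CutDense

section MinSemideg

variable {V : Type*} [Fintype V] [DecidableEq V] {T : V → V → Prop} [DecidableRel T]

theorem le_eDir_of_le_outDeg (hT : ∀ u v, T u v → ¬ T v u) {d : ℝ} {X Y : Finset V}
    (hout : ∀ v ∈ X, d ≤ outDeg T v) (hd : Disjoint X Y) (hu : X ∪ Y = univ) :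
    #X * d - (#X * #X - #X) / 2 ≤ eDir T X Y := by
  have hsplit : (eDir T X X : ℝ) + eDir T X Y = ∑ v ∈ X, (outDeg T v : ℝ) := by
    rw [← Nat.cast_add, ← eDir_union_right X hd, hu, eDir_univ_right, Nat.cast_sum]
  have hself : 2 * (eDir T X X : ℝ) ≤ #X * #X - #X := by
    have h := (Nat.cast_le (α := ℝ)).2 (two_mul_eDir_self_le hT X)
    rw [Nat.cast_sub (Nat.le_mul_self _)] at h
    exact_mod_cast h
  have hsum : #X * d ≤ ∑ v ∈ X, (outDeg T v : ℝ) := by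
    simpa using card_nsmul_le_sum X _ d hout
  linarith

theorem le_eDir_of_card_le {δ : ℝ} (hT : ∀ u v, T u v → ¬ T v u) (hcut : CutDense T δ)
    (hout : ∀ v, (Fintype.card V : ℝ) / 4 - δ * Fintype.card V / 16 ≤ outDeg T v)
    {X Y : Finset V} (hd : Disjoint X Y) (hu : X ∪ Y = univ) (hle : #X ≤ #Y) :
    δ / 16 * #X * #Y ≤ eDir T X Y := by
  have hcard : #X + #Y = Fintype.card V := by rw [← card_union_of_disjoint hd, hu, card_univ]
  have hxy : (#X : ℝ) + #Y = Fintype.card V := by exact_mod_cast hcard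
  have hx0 : (0 : ℝ) ≤ #X := Nat.cast_nonneg _
  have hy0 : (0 : ℝ) ≤ #Y := Nat.cast_nonneg _
  rcases le_or_gt δ 0 with hδ | hδ
  · nlinarith [mul_nonneg hx0 hy0, Nat.cast_nonneg (α := ℝ) (eDir T X Y)]
  rcases Nat.eq_zero_or_pos #X with hX0 | hXpos
  · simp [hX0]
  by_cases hsmall : (#X : ℝ) ≤ Fintype.card V / 2 - δ * Fintype.card V / 4 + 1
  · have hdeg := le_eDir_of_le_outDeg hT (fun v _ => hout v) hd hu
    rw [← hxy] at hsmall hdeg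
    nlinarith [mul_nonneg hx0 (sub_nonneg.2 hsmall), mul_nonneg (mul_nonneg hδ.le hx0) hx0]
  · obtain ⟨t, ht₁, ht₂, hcd⟩ := hcut.exists_le_eDir hd hu hle
    have hδ1 : δ ≤ 1 := hcut.le_one (by omega)
    have hY : (Fintype.card V : ℝ) / 2 ≤ #Y - t := by linarith
    have hX : δ * Fintype.card V / 4 ≤ δ * (#X + t) - t := by
      nlinarith [mul_nonneg hδ.le (show 0 ≤ 2 * (#X + t) - ((Fintype.card V : ℝ) - 1) by linarith)]
    calc δ / 16 * #X * #Y ≤ Fintype.card V / 2 * (δ * Fintype.card V / 4) := by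
          rw [← hxy]
          nlinarith [mul_nonneg hδ.le (sq_nonneg ((#X : ℝ) - #Y)),
            mul_nonneg hδ.le (mul_nonneg hx0 hy0)]
      _ ≤ (#Y - t) * (δ * (#X + t) - t) :=
          mul_le_mul hY hX (by have := hδ.le; positivity) (by linarith)
      _ ≤ eDir T X Y := by linarith

end MinSemideg

/-- if `T` is a `δ`-cut-dense tournament on `n` vertices with minimum semidegree
at least `n/4 − δn/16`, then every partition `(X,Y)` of the vertex set satisfies
`e⃗(X,Y) ≥ (δ/16)|X||Y|`. -/
theorem any_cut_is_dense {V : Type*} [Fintype V] [DecidableEq V]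
    (T : V → V → Prop) [DecidableRel T] (hT : IsTournament T) (δ : ℝ)
    (hcut : CutDense T δ)
    (hdeg : MinSemidegGE T ((Fintype.card V : ℝ) / 4 - δ * (Fintype.card V : ℝ) / 16)) :
    ∀ X Y : Finset V, Disjoint X Y → X ∪ Y = Finset.univ →
      δ / 16 * X.card * Y.card ≤ (eDir T X Y : ℝ) := by
  intro X Y hd hu
  rcases le_total #X #Y with hle | hle
  · exact le_eDir_of_card_le (fun _ _ => hT.asymm_s6) hcut (fun v => (hdeg v).1) hd hu hle
  · have h := le_eDir_of_card_le (fun _ _ => hT.asymm_s6) hcut.swap (fun v => (hdeg v).2)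
      hd.symm (by rwa [union_comm]) hle
    rw [eDir_swap] at h
    linarith
end

section
/- Let α ∈ (0,1) and let t, k, N be positive integers with t ≥ k/α. Let S₁, …, S_t be subsets of an N-element set, each of size at least αN. Then there exist k distinct indices i₁ < … < i_k such that |S_{i₁} ∩ … ∩ S_{i_k}| ≥ (α/e)^k · N. -/
/-!
Double count the pairs `(x, I)` with `|I| = k` and `x ∈ S i` for all `i ∈ I`: the total size of
the `k`-fold intersections is `∑ₓ C(d(x), k)`, where the degrees `d(x) = #{i | x ∈ S i}` have
mean at least `αt ≥ k`. Since `y ↦ y(y-1)⋯(y-k+1)` is convex and increasing on `[k-1, ∞)`,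
Jensen bounds this sum below by `N · (αt/k)^k`, while there are only `C(t, k) ≤ (et/k)^k`
index sets `I`; so some `I` has an intersection of size at least `(α/e)^k · N`.
-/

open Finset

section DoubleCounting

variable {ι β : Type*} [Fintype ι] [DecidableEq β]

theorem sum_card_filter_forall_mem_eq_sum_choose (S : ι → Finset β) (N : Finset β) (k : ℕ)
    [∀ I : Finset ι, DecidablePred fun x => ∀ i ∈ I, x ∈ S i] :
    ∑ I ∈ powersetCard k univ, #{x ∈ N | ∀ i ∈ I, x ∈ S i} =
      ∑ x ∈ N, (#{i | x ∈ S i}).choose k := by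
  refine (sum_card_bipartiteAbove_eq_sum_card_bipartiteBelow
    (fun I x => ∀ i ∈ I, x ∈ S i)).trans (sum_congr rfl fun x _ => ?_)
  rw [← card_powersetCard]
  congr 1
  ext I
  simp [bipartiteBelow, subset_iff, and_comm]

theorem sum_card_eq_sum_card_filter_mem {S : ι → Finset β} {N : Finset β}
    (hsub : ∀ i, S i ⊆ N) :
    ∑ i, #(S i) = ∑ x ∈ N, #{i | x ∈ S i} := by
  refine .trans (sum_congr rfl fun i _ => ?_)
    (sum_card_bipartiteAbove_eq_sum_card_bipartiteBelow (fun i x => x ∈ S i))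
  rw [bipartiteAbove, filter_mem_eq_inter, inter_eq_right.2 (hsub i)]

end DoubleCounting

theorem pow_div_mul_factorial_le_descPochhammer_eval {K : Type*} [Field K] [LinearOrder K]
    [IsStrictOrderedRing K] {k : ℕ} {y : K} (hky : k ≤ y) :
    (y / k) ^ k * k.factorial ≤ (descPochhammer K k).eval y := by
  rcases k.eq_zero_or_pos with rfl | hk
  · simp
  have hyk : 1 ≤ y / k := by rwa [one_le_div (by exact_mod_cast hk)]
  rw [← Nat.descFactorial_self, ← descPochhammer_eval_eq_descFactorial,
    descPochhammer_eval_eq_prod_range, descPochhammer_eval_eq_prod_range]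
  calc (y / k) ^ k * ∏ j ∈ range k, ((k : K) - j) = ∏ j ∈ range k, y / k * (k - j) := by
        rw [prod_mul_distrib, prod_const, card_range]
    _ ≤ ∏ j ∈ range k, (y - j) := prod_le_prod (fun j hj => ?_) (fun j hj => ?_)
  all_goals have hjk : (j : K) ≤ k := by exact_mod_cast (mem_range.1 hj).le
  · exact mul_nonneg (by positivity) (sub_nonneg.2 hjk)
  · have : y / k * (k - j) = y - y / k * j := by field_simp
    rw [this]
    nlinarith [Nat.cast_nonneg (α := K) j]

theorem Nat.choose_le_exp_one_mul_div_pow (n k : ℕ) :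
    (n.choose k : ℝ) ≤ (Real.exp 1 * n / k) ^ k := by
  rcases k.eq_zero_or_pos with rfl | hk
  · simp
  have hkk : (k : ℝ) ^ k ≤ Real.exp 1 ^ k * k.factorial := by
    have := Real.pow_div_factorial_le_exp (k : ℝ) (Nat.cast_nonneg k) k
    rwa [← Real.exp_one_pow, div_le_iff₀ (by positivity)] at this
  calc (n.choose k : ℝ) ≤ n ^ k / k.factorial := Nat.choose_le_pow_div k n
    _ ≤ (Real.exp 1 * n / k) ^ k := by
      rw [div_pow, mul_pow, div_le_div_iff₀ (by positivity) (by positivity)]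
      nlinarith [pow_nonneg (Nat.cast_nonneg (α := ℝ) n) k]

theorem card_mul_div_pow_le_sum_choose {β : Type*} {N : Finset β} (hN : N.Nonempty)
    (d : β → ℕ) {k : ℕ} (hk : k ≠ 0) {a : ℝ} (hka : k ≤ a)
    (hd : #N * a ≤ ∑ x ∈ N, (d x : ℝ)) :
    #N * (a / k) ^ k ≤ ∑ x ∈ N, ((d x).choose k : ℝ) := by
  have hN' : (0 : ℝ) < #N := by exact_mod_cast hN.card_pos
  set m := ∑ x ∈ N, (#N : ℝ)⁻¹ * d x with hm
  have ham : a ≤ m := by rwa [hm, ← mul_sum, ← div_eq_inv_mul, le_div_iff₀' hN']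
  have hjensen := descPochhammer_eval_div_factorial_le_sum_choose hk d (fun _ => (#N : ℝ)⁻¹)
    (fun _ _ => by positivity) (by simp [hN'.ne']) (by linarith)
  have hmono := monotoneOn_descPochhammer_eval (S := ℝ) k (show (k : ℝ) - 1 ≤ a by linarith)
    (show (k : ℝ) - 1 ≤ m by linarith) ham
  calc #N * (a / k) ^ k
      ≤ #N * ((descPochhammer ℝ k).eval m / k.factorial) := by
        gcongr
        rw [le_div_iff₀ (by positivity)]
        exact (pow_div_mul_factorial_le_descPochhammer_eval hka).trans hmono
    _ ≤ #N * ∑ x ∈ N, (#N : ℝ)⁻¹ * (d x).choose k := by gcongr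
    _ = ∑ x ∈ N, ((d x).choose k : ℝ) := by rw [← mul_sum, mul_inv_cancel_left₀ hN'.ne']

theorem kst_intersection_general {β : Type*} [DecidableEq β] (α : ℝ) (hα0 : 0 < α)
    (t k : ℕ) (hk : 0 < k) (htk : (k : ℝ) / α ≤ (t : ℝ))
    (N : Finset β) (hN : 0 < N.card)
    (S : Fin t → Finset β) (hsub : ∀ i, S i ⊆ N)
    (hsize : ∀ i, α * (N.card : ℝ) ≤ ((S i).card : ℝ)) :
    ∃ I : Finset (Fin t), I.card = k ∧
      (α / Real.exp 1) ^ k * (N.card : ℝ) ≤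
        ((N.filter fun x => ∀ i ∈ I, x ∈ S i).card : ℝ) := by
  have hk' : (0 : ℝ) < k := Nat.cast_pos.2 hk
  have hkt : (k : ℝ) ≤ α * t := by rwa [div_le_iff₀ hα0, mul_comm] at htk
  have hdeg : #N * (α * t) ≤ ∑ x ∈ N, (#{i | x ∈ S i} : ℝ) := by
    calc #N * (α * t) = ∑ _i : Fin t, α * #N := by
          rw [sum_const, card_univ, Fintype.card_fin, nsmul_eq_mul]; ring
      _ ≤ ∑ i, (#(S i) : ℝ) := sum_le_sum fun i _ => hsize i
      _ = ∑ x ∈ N, (#{i | x ∈ S i} : ℝ) := mod_cast sum_card_eq_sum_card_filter_mem hsub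
  have hsum : #N * (α * t / k) ^ k ≤
      ∑ I ∈ powersetCard k univ, (#{x ∈ N | ∀ i ∈ I, x ∈ S i} : ℝ) := by
    rw [← Nat.cast_sum, sum_card_filter_forall_mem_eq_sum_choose, Nat.cast_sum]
    exact card_mul_div_pow_le_sum_choose (card_pos.1 hN) _ hk.ne' hkt hdeg
  have hchoose : (t.choose k : ℝ) * (α / Real.exp 1) ^ k ≤ (α * t / k) ^ k := by
    calc (t.choose k : ℝ) * (α / Real.exp 1) ^ k
        ≤ (Real.exp 1 * t / k) ^ k * (α / Real.exp 1) ^ k := by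
          gcongr; exact Nat.choose_le_exp_one_mul_div_pow t k
      _ = (α * t / k) ^ k := by rw [← mul_pow]; field_simp
  have hpos : (0 : ℝ) < #N * (α * t / k) ^ k := by
    have : 0 < α * t / k := div_pos (hk'.trans_le hkt) hk'
    positivity
  have hmean :
      ∑ _I ∈ powersetCard k (univ : Finset (Fin t)), (α / Real.exp 1) ^ k * (#N : ℝ) ≤
      ∑ I ∈ powersetCard k univ, (#{x ∈ N | ∀ i ∈ I, x ∈ S i} : ℝ) := by
    rw [sum_const, card_powersetCard, card_univ, Fintype.card_fin, nsmul_eq_mul]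
    nlinarith
  obtain ⟨I, hI, hle⟩ :=
    exists_le_of_sum_le (nonempty_of_sum_ne_zero (hpos.trans_le hsum).ne') hmean
  exact ⟨I, (mem_powersetCard.1 hI).2, hle⟩

/-- Kővári–Sós–Turán-type lemma: given `t ≥ k/α` subsets of an `N`-element
set, each of size at least `αN`, some `k` of them intersect in at least `(α/e)^k·N`
elements. -/
theorem kst_intersection {β : Type*} [DecidableEq β] (α : ℝ) (hα0 : 0 < α) (hα1 : α < 1)
    (t k : ℕ) (ht : 0 < t) (hk : 0 < k) (htk : (k : ℝ) / α ≤ (t : ℝ))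
    (N : Finset β) (hN : 0 < N.card)
    (S : Fin t → Finset β) (hsub : ∀ i, S i ⊆ N)
    (hsize : ∀ i, α * (N.card : ℝ) ≤ ((S i).card : ℝ)) :
    ∃ I : Finset (Fin t), I.card = k ∧
      (α / Real.exp 1) ^ k * (N.card : ℝ) ≤
        ((N.filter fun x => ∀ i ∈ I, x ∈ S i).card : ℝ) :=
  kst_intersection_general α hα0 t k hk htk N hN S hsub hsize
end

section
/- Let T be a tournament and A, S ⊆ V(T) with |S| ≥ 2^{30k}. Suppose every vertex v ∈ S satisfies d⁺_A(v) ≥ |A|/20. Then S contains an A-head of size k; moreover, more than a 1/2^{30k²} fraction of the k-element subsets of S are A-heads. Analogously, if every v ∈ S satisfies d⁻_A(v) ≥ |A|/20, then S contains an A-tail of size k and more than a 1/2^{30k²} fraction of the k-element subsets of S are A-tails. -/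
/-- `S` is an `A`-head of size `k`: `S` has `k` elements, induces a transitive
subtournament, and its common out-neighbourhood inside `A` has size at least `|A|/2^{6k}`. -/
def IsHead {V : Type*} (T : V → V → Prop) (A : Finset V) (k : ℕ) (S : Finset V) : Prop :=
  S.card = k ∧ TransOn T S ∧
    (A.card : ℝ) / 2 ^ (6 * k) ≤ ({a : V | a ∈ A ∧ ∀ s ∈ S, T s a}.ncard : ℝ)

/-- `S` is an `A`-tail of size `k`: `S` has `k` elements, induces a transitive
subtournament, and its common in-neighbourhood inside `A` has size at least `|A|/2^{6k}`. -/
def IsTail {V : Type*} (T : V → V → Prop) (A : Finset V) (k : ℕ) (S : Finset V) : Prop :=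
  S.card = k ∧ TransOn T S ∧
    (A.card : ℝ) / 2 ^ (6 * k) ≤ ({a : V | a ∈ A ∧ ∀ s ∈ S, T a s}.ncard : ℝ)


open Finset
open scoped Classical

namespace IsTournament

variable {V : Type*} {T : V → V → Prop}

lemma asymm_s9 (hT : IsTournament T) {u v : V} (h : T u v) : ¬ T v u := by
  rcases eq_or_ne u v with rfl | hne
  · exact absurd h (hT.1 u)
  · exact (hT.2 u v hne).mp h

lemma of_not (hT : IsTournament T) {u v : V} (hne : u ≠ v) (h : ¬ T u v) : T v u :=
  (hT.2 v u hne.symm).mpr h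

lemma card_outNbhd_add_card_inNbhd (hT : IsTournament T) {D : Finset V} {v : V} (hv : v ∈ D) :
    #{u ∈ D | T v u} + #{u ∈ D | T u v} + 1 = #D := by
  have hnot : {u ∈ D | ¬ T v u} = insert v {u ∈ D | T u v} := by
    ext u
    simp only [mem_filter, mem_insert]
    constructor
    · rintro ⟨huD, hvu⟩
      rcases eq_or_ne u v with rfl | hne
      · exact Or.inl rfl
      · exact Or.inr ⟨huD, hT.of_not hne.symm hvu⟩
    · rintro (rfl | ⟨huD, huv⟩)
      · exact ⟨hv, hT.1 u⟩
      · exact ⟨huD, hT.asymm_s9 huv⟩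
  have hv' : v ∉ {u ∈ D | T u v} := fun h => hT.1 v (mem_filter.mp h).2
  rw [← card_filter_add_card_filter_not (s := D) (T v), hnot, card_insert_of_notMem hv']
  ring

lemma two_mul_sum_card_outNbhd_add_card (hT : IsTournament T) (D : Finset V) :
    2 * ∑ v ∈ D, #{u ∈ D | T v u} + #D = #D * #D := by
  have hsymm : ∑ v ∈ D, #{u ∈ D | T u v} = ∑ v ∈ D, #{u ∈ D | T v u} := by
    simp only [card_filter]
    exact sum_comm
  have h := sum_congr rfl fun v hv => hT.card_outNbhd_add_card_inNbhd (D := D) hv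
  rw [sum_add_distrib, sum_add_distrib, hsymm, sum_const, smul_eq_mul] at h
  simpa [two_mul] using h

lemma card_le_four_mul_card_filter_outdeg (hT : IsTournament T) {D : Finset V} (hD : 2 ≤ #D) :
    #D ≤ 4 * #{v ∈ D | #D ≤ 8 * #{u ∈ D | T v u}} := by
  have hG : ∑ v ∈ D with #D ≤ 8 * #{u ∈ D | T v u}, (#{u ∈ D | T v u} + 1)
      ≤ #{v ∈ D | #D ≤ 8 * #{u ∈ D | T v u}} * #D := by
    refine (sum_le_sum fun v hv => ?_).trans (sum_const _).le
    have := hT.card_outNbhd_add_card_inNbhd (mem_filter.mp hv).1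
    omega
  have hB : ∑ v ∈ D with ¬ #D ≤ 8 * #{u ∈ D | T v u}, (8 * #{u ∈ D | T v u} + 1)
      ≤ #{v ∈ D | ¬ #D ≤ 8 * #{u ∈ D | T v u}} * #D := by
    refine (sum_le_sum fun v hv => ?_).trans (sum_const _).le
    have := (mem_filter.mp hv).2
    omega
  have hsplit := sum_filter_add_sum_filter_not D (fun v => #D ≤ 8 * #{u ∈ D | T v u})
    (fun v => #{u ∈ D | T v u})
  have hcard := card_filter_add_card_filter_not (s := D) (fun v => #D ≤ 8 * #{u ∈ D | T v u})
  have htot := hT.two_mul_sum_card_outNbhd_add_card D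
  simp only [sum_add_distrib, ← mul_sum, sum_const, smul_eq_mul, mul_one] at hG hB
  by_contra! h
  nlinarith

end IsTournament

section TransSubsets

variable {V : Type*} {T : V → V → Prop}

variable (T) in
noncomputable def transSubsets (k : ℕ) (Q : Finset V) : Finset (Finset V) :=
  {K ∈ Q.powersetCard k | TransOn T K}

lemma mem_transSubsets {k : ℕ} {Q K : Finset V} :
    K ∈ transSubsets T k Q ↔ K ⊆ Q ∧ #K = k ∧ TransOn T K := by
  simp [transSubsets, mem_powersetCard, and_assoc]

lemma transSubsets_mono {k : ℕ} {Q Q' : Finset V} (h : Q ⊆ Q') :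
    transSubsets T k Q ⊆ transSubsets T k Q' :=
  filter_subset_filter _ (powersetCard_mono h)

lemma card_transSubsets_le_pow (k : ℕ) (Q : Finset V) : #(transSubsets T k Q) ≤ #Q ^ k :=
  (card_filter_le _ _).trans ((card_powersetCard k Q).le.trans (Nat.choose_le_pow _ _))

lemma card_transSubsets_zero (Q : Finset V) : #(transSubsets T 0 Q) = 1 := by
  simp [transSubsets, TransOn, filter_singleton]

lemma insert_mem_transSubsets (hT : IsTournament T) {D J : Finset V} {v : V} {j : ℕ}
    (hv : v ∈ D) (hJ : J ∈ transSubsets T j {u ∈ D | T v u}) :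
    insert v J ∈ transSubsets T (j + 1) D := by
  obtain ⟨hJD, hJcard, hJtr⟩ := mem_transSubsets.mp hJ
  have hvJ : ∀ u ∈ J, T v u := fun u hu => (mem_filter.mp (hJD hu)).2
  have hv' : v ∉ J := fun h => hT.1 v (hvJ v h)
  refine mem_transSubsets.mpr ⟨insert_subset hv fun u hu => (mem_filter.mp (hJD hu)).1,
    by rw [card_insert_of_notMem hv', hJcard], ?_⟩
  intro a ha b hb c hc hab hbc
  rw [mem_insert] at ha hb hc
  rcases hc with rfl | hc
  · rcases hb with rfl | hb
    exacts [absurd hbc (hT.1 _), absurd hbc (hT.asymm_s9 (hvJ b hb))]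
  rcases ha with rfl | ha
  · exact hvJ c hc
  rcases hb with rfl | hb
  · exact absurd hab (hT.asymm_s9 (hvJ a ha))
  · exact hJtr a ha b hb c hc hab hbc

/-- `(v, J) ↦ insert v J` is injective because `v` is the source of `insert v J`. -/
lemma sum_card_transSubsets_outNbhd_le (hT : IsTournament T) {D G : Finset V} (hG : G ⊆ D)
    (j : ℕ) :
    ∑ v ∈ G, #(transSubsets T j {u ∈ D | T v u}) ≤ #(transSubsets T (j + 1) D) := by
  rw [← card_sigma]
  refine card_le_card_of_injOn (fun p => insert p.1 p.2)
    (fun p hp => insert_mem_transSubsets hT (hG (mem_sigma.mp hp).1) (mem_sigma.mp hp).2) ?_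
  rintro ⟨v, J⟩ hp ⟨v', J'⟩ hp' heq
  simp only [coe_sigma, Set.mem_sigma_iff, mem_coe] at hp hp' heq
  have hvJ : ∀ u ∈ J, T v u := fun u hu => (mem_filter.mp ((mem_transSubsets.mp hp.2).1 hu)).2
  have hvJ' : ∀ u ∈ J', T v' u :=
    fun u hu => (mem_filter.mp ((mem_transSubsets.mp hp'.2).1 hu)).2
  obtain rfl : v = v' := by
    by_contra hne
    have h1 : v' ∈ insert v J := by rw [heq]; exact mem_insert_self v' J'
    have h2 : v ∈ insert v' J' := by rw [← heq]; exact mem_insert_self v J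
    exact hT.asymm_s9 (hvJ v' ((mem_insert.mp h1).resolve_left (Ne.symm hne)))
      (hvJ' v ((mem_insert.mp h2).resolve_left hne))
  have hnJ : v ∉ J := fun h => hT.1 v (hvJ v h)
  have hnJ' : v ∉ J' := fun h => hT.1 v (hvJ' v h)
  rw [← erase_insert hnJ, ← erase_insert hnJ', heq]

theorem pow_card_le_card_transSubsets (hT : IsTournament T) (j : ℕ) (D : Finset V)
    (hD : 8 ^ j ≤ #D) : #D ^ j ≤ 4 ^ (j ^ 2) * #(transSubsets T j D) := by
  induction j generalizing D with
  | zero => simp [card_transSubsets_zero]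
  | succ j ih =>
    set G := {v ∈ D | #D ≤ 8 * #{u ∈ D | T v u}}
    have hG : #D ≤ 4 * #G :=
      hT.card_le_four_mul_card_filter_outdeg (le_trans (by norm_num) ((Nat.le_self_pow
        (by omega) 8).trans hD))
    have hvG : ∀ v ∈ G,
        #D ^ j ≤ 8 ^ j * (4 ^ (j ^ 2) * #(transSubsets T j {u ∈ D | T v u})) := by
      intro v hv
      have hv8 := (mem_filter.mp hv).2
      have hdeg : 8 ^ j ≤ #{u ∈ D | T v u} := by rw [pow_succ] at hD; omega
      calc #D ^ j ≤ (8 * #{u ∈ D | T v u}) ^ j := Nat.pow_le_pow_left hv8 j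
        _ = 8 ^ j * #{u ∈ D | T v u} ^ j := mul_pow _ _ _
        _ ≤ _ := Nat.mul_le_mul_left _ (ih _ hdeg)
    calc #D ^ (j + 1) = #D ^ j * #D := pow_succ _ _
      _ ≤ #D ^ j * (4 * #G) := Nat.mul_le_mul_left _ hG
      _ = 4 * ∑ _v ∈ G, #D ^ j := by rw [sum_const, smul_eq_mul]; ring
      _ ≤ 4 * ∑ v ∈ G, 8 ^ j * (4 ^ (j ^ 2) * #(transSubsets T j {u ∈ D | T v u})) :=
          Nat.mul_le_mul_left _ (sum_le_sum hvG)
      _ = 4 * 8 ^ j * 4 ^ (j ^ 2) * ∑ v ∈ G, #(transSubsets T j {u ∈ D | T v u}) := by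
          rw [← mul_sum, ← mul_sum]; ring
      _ ≤ 4 * 8 ^ j * 4 ^ (j ^ 2) * #(transSubsets T (j + 1) D) :=
          Nat.mul_le_mul_left _ (sum_card_transSubsets_outNbhd_le hT (filter_subset _ _) j)
      _ ≤ 4 ^ ((j + 1) ^ 2) * #(transSubsets T (j + 1) D) := by
          gcongr
          calc 4 * 8 ^ j * 4 ^ (j ^ 2) ≤ 4 * 16 ^ j * 4 ^ (j ^ 2) := by gcongr; norm_num
            _ = 4 ^ ((j + 1) ^ 2) := by
                rw [show (16 : ℕ) = 4 ^ 2 by rfl, ← pow_mul, ← pow_succ', ← pow_add]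
                ring_nf

end TransSubsets

lemma card_le_mul_card_filter_of_two_mul_le_sum {ι : Type*} {F : Finset ι} {f : ι → ℕ}
    {M c : ℕ} (hc : 0 < c) (hf : ∀ i ∈ F, f i ≤ M)
    (h : 2 * M * #F ≤ c * ∑ i ∈ F, f i) :
    #F ≤ c * #{i ∈ F | M ≤ c * f i} := by
  rcases Nat.eq_zero_or_pos M with rfl | hM
  · simpa using Nat.le_mul_of_pos_left #F hc
  have hgood :
      c * ∑ i ∈ F with M ≤ c * f i, f i ≤ c * (#{i ∈ F | M ≤ c * f i} * M) := by
    rw [← smul_eq_mul _ M, ← sum_const]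
    exact Nat.mul_le_mul_left _ (sum_le_sum fun i hi => hf i (mem_filter.mp hi).1)
  have hbad : c * ∑ i ∈ F with ¬ M ≤ c * f i, f i ≤ #F * M := by
    rw [mul_sum]
    refine (sum_le_sum fun i hi => (not_le.mp (mem_filter.mp hi).2).le).trans ?_
    rw [sum_const, smul_eq_mul]
    exact Nat.mul_le_mul_right _ (card_filter_le _ _)
  rw [← sum_filter_add_sum_filter_not F (fun i => M ≤ c * f i), mul_add] at h
  exact Nat.le_of_mul_le_mul_left (by nlinarith) hM

section CommonNbhds

variable {V : Type*} (T R : V → V → Prop) (A : Finset V) (k : ℕ)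

noncomputable def commonNbhd (K : Finset V) : Finset V := {x ∈ A | ∀ v ∈ K, R v x}

/-- With `R = T` these are the `A`-heads inside `S`, with `R = fun u v => T v u` the `A`-tails. -/
noncomputable def heads (S : Finset V) : Finset (Finset V) :=
  {K ∈ transSubsets T k S | #A ≤ 64 ^ k * #(commonNbhd R A K)}

def HasLargeCommonNbhds (Q : Finset V) : Prop :=
  2 * #A * #(transSubsets T k Q) ≤ 64 ^ k * ∑ K ∈ transSubsets T k Q, #(commonNbhd R A K)

noncomputable def transDensity (Q : Finset V) : ℝ := #(transSubsets T k Q) / #Q ^ k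

variable {T R A k}

lemma heads_mono {S S' : Finset V} (h : S ⊆ S') : heads T R A k S ⊆ heads T R A k S' :=
  filter_subset_filter _ (transSubsets_mono h)

lemma card_transSubsets_le_card_heads {Q : Finset V} (h : HasLargeCommonNbhds T R A k Q) :
    #(transSubsets T k Q) ≤ 64 ^ k * #(heads T R A k Q) :=
  card_le_mul_card_filter_of_two_mul_le_sum (by positivity)
    (fun _ _ => card_filter_le _ _) h

lemma sum_card_transSubsets_filter_eq_sum_card_commonNbhd (Q : Finset V) :
    ∑ x ∈ A, #(transSubsets T k {v ∈ Q | R v x}) =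
      ∑ K ∈ transSubsets T k Q, #(commonNbhd R A K) := by
  have h : ∀ x,
      transSubsets T k {v ∈ Q | R v x} = {K ∈ transSubsets T k Q | ∀ v ∈ K, R v x} := by
    intro x
    ext K
    simp only [mem_filter, mem_transSubsets, subset_iff]
    grind
  simp_rw [h, commonNbhd, card_filter]
  exact sum_comm

lemma card_mul_pow_le_sum_pow (hk : 1 ≤ k) {Q : Finset V}
    (hdeg : ∀ v ∈ Q, #A ≤ 20 * #{x ∈ A | R v x}) :
    #A * #Q ^ k ≤ 20 ^ k * ∑ x ∈ A, #{v ∈ Q | R v x} ^ k := by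
  obtain ⟨n, rfl⟩ : ∃ n, k = n + 1 := ⟨k - 1, by omega⟩
  rcases Nat.eq_zero_or_pos #A with hA | hA
  · simp [hA]
  have hsum : #Q * #A ≤ 20 * ∑ x ∈ A, #{v ∈ Q | R v x} := by
    have hswap : ∑ x ∈ A, #{v ∈ Q | R v x} = ∑ v ∈ Q, #{x ∈ A | R v x} := by
      simp only [card_filter]; exact sum_comm
    rw [hswap, mul_sum, ← smul_eq_mul, ← sum_const]
    exact sum_le_sum hdeg
  refine Nat.le_of_mul_le_mul_left ?_ (pow_pos hA n)
  calc #A ^ n * (#A * #Q ^ (n + 1)) = (#Q * #A) ^ (n + 1) := by ring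
    _ ≤ (20 * ∑ x ∈ A, #{v ∈ Q | R v x}) ^ (n + 1) := Nat.pow_le_pow_left hsum _
    _ = 20 ^ (n + 1) * (∑ x ∈ A, #{v ∈ Q | R v x}) ^ (n + 1) := mul_pow _ _ _
    _ ≤ 20 ^ (n + 1) * (#A ^ n * ∑ x ∈ A, #{v ∈ Q | R v x} ^ (n + 1)) :=
        Nat.mul_le_mul_left _ (pow_sum_le_card_mul_sum_pow (fun _ _ => Nat.zero_le _) n)
    _ = _ := by ring

lemma card_mul_pow_le_two_mul_sum_pow_filter (hk : 1 ≤ k) {Q : Finset V}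
    (hdeg : ∀ v ∈ Q, #A ≤ 20 * #{x ∈ A | R v x}) :
    #A * #Q ^ k ≤
      2 * 20 ^ k * ∑ x ∈ A with #Q ≤ 40 * #{v ∈ Q | R v x}, #{v ∈ Q | R v x} ^ k := by
  have hlight :
      2 * 20 ^ k * ∑ x ∈ A with ¬ #Q ≤ 40 * #{v ∈ Q | R v x}, #{v ∈ Q | R v x} ^ k ≤
        #A * #Q ^ k := by
    rw [mul_sum]
    refine (sum_le_sum (g := fun _ => #Q ^ k) fun x hx => ?_).trans ((sum_const _).le.trans ?_)
    · calc 2 * 20 ^ k * #{v ∈ Q | R v x} ^ k ≤ 2 ^ k * 20 ^ k * #{v ∈ Q | R v x} ^ k := by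
            gcongr; exact Nat.le_self_pow (by omega) 2
        _ = (40 * #{v ∈ Q | R v x}) ^ k := by rw [← mul_pow]; norm_num [mul_pow]
        _ ≤ #Q ^ k := Nat.pow_le_pow_left (not_le.mp (mem_filter.mp hx).2).le k
    · rw [smul_eq_mul]
      exact Nat.mul_le_mul_right _ (card_filter_le _ _)
  have h := card_mul_pow_le_sum_pow hk hdeg
  rw [← sum_filter_add_sum_filter_not A (fun x => #Q ≤ 40 * #{v ∈ Q | R v x})] at h
  nlinarith

end CommonNbhds

section DensityIncrement

variable {V : Type*} {T R : V → V → Prop} {A : Finset V} {k : ℕ}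

lemma exists_nbhd_of_not_hasLargeCommonNbhds (hk : 1 ≤ k) {Q : Finset V} (hQ : Q.Nonempty)
    (hdeg : ∀ v ∈ Q, #A ≤ 20 * #{x ∈ A | R v x}) (h : ¬ HasLargeCommonNbhds T R A k Q) :
    ∃ x ∈ A, #Q ≤ 40 * #{v ∈ Q | R v x} ∧
      64 ^ k * #(transSubsets T k {v ∈ Q | R v x}) * #Q ^ k ≤
        4 * 20 ^ k * #(transSubsets T k Q) * #{v ∈ Q | R v x} ^ k := by
  by_contra! hx
  apply h
  refine Nat.le_of_mul_le_mul_right ?_ (pow_pos hQ.card_pos k)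
  set W := #(transSubsets T k Q)
  calc 2 * #A * W * #Q ^ k = 2 * W * (#A * #Q ^ k) := by ring
    _ ≤ 2 * W * (2 * 20 ^ k *
          ∑ x ∈ A with #Q ≤ 40 * #{v ∈ Q | R v x}, #{v ∈ Q | R v x} ^ k) :=
        Nat.mul_le_mul_left _ (card_mul_pow_le_two_mul_sum_pow_filter hk hdeg)
    _ = ∑ x ∈ A with #Q ≤ 40 * #{v ∈ Q | R v x},
          4 * 20 ^ k * W * #{v ∈ Q | R v x} ^ k := by
        rw [mul_sum, mul_sum]; exact sum_congr rfl fun _ _ => by ring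
    _ ≤ ∑ x ∈ A with #Q ≤ 40 * #{v ∈ Q | R v x},
          64 ^ k * #(transSubsets T k {v ∈ Q | R v x}) * #Q ^ k :=
        sum_le_sum fun y hy => (hx y (mem_filter.mp hy).1 (mem_filter.mp hy).2).le
    _ ≤ ∑ x ∈ A, 64 ^ k * #(transSubsets T k {v ∈ Q | R v x}) * #Q ^ k :=
        sum_le_sum_of_subset (filter_subset _ _)
    _ = 64 ^ k * (∑ K ∈ transSubsets T k Q, #(commonNbhd R A K)) * #Q ^ k := by
        rw [← sum_mul, ← mul_sum, sum_card_transSubsets_filter_eq_sum_card_commonNbhd]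

lemma transDensity_le_one (Q : Finset V) : transDensity T k Q ≤ 1 :=
  div_le_one_of_le₀ (by exact_mod_cast card_transSubsets_le_pow k Q) (by positivity)

lemma one_le_mul_transDensity (hT : IsTournament T) {Q : Finset V} (hQ : 8 ^ k ≤ #Q) :
    1 ≤ 4 ^ (k ^ 2) * transDensity T k Q := by
  have hQ0 : (0 : ℝ) < #Q := by exact_mod_cast (Nat.one_le_pow _ _ (by norm_num)).trans hQ
  rw [transDensity, ← mul_div_assoc, one_le_div (by positivity)]
  exact_mod_cast pow_card_le_card_transSubsets hT k Q hQ

lemma exists_transDensity_nbhd_le (hk : 1 ≤ k) {Q : Finset V} (hQ : Q.Nonempty)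
    (hdeg : ∀ v ∈ Q, #A ≤ 20 * #{x ∈ A | R v x}) (h : ¬ HasLargeCommonNbhds T R A k Q) :
    ∃ x ∈ A, #Q ≤ 40 * #{v ∈ Q | R v x} ∧
      transDensity T k {v ∈ Q | R v x} ≤ 4 * 20 ^ k / 64 ^ k * transDensity T k Q := by
  obtain ⟨x, hxA, hheavy, hx⟩ := exists_nbhd_of_not_hasLargeCommonNbhds hk hQ hdeg h
  refine ⟨x, hxA, hheavy, ?_⟩
  have hQx : (0 : ℝ) < #{v ∈ Q | R v x} := by
    have := hQ.card_pos
    exact_mod_cast (by omega : 0 < #{v ∈ Q | R v x})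
  have hQ0 : (0 : ℝ) < #Q := by exact_mod_cast hQ.card_pos
  rw [transDensity, transDensity, div_mul_div_comm, div_le_div_iff₀ (by positivity)
    (by positivity)]
  have hx' : (64 ^ k * #(transSubsets T k {v ∈ Q | R v x}) * #Q ^ k : ℝ) ≤
      4 * 20 ^ k * #(transSubsets T k Q) * #{v ∈ Q | R v x} ^ k := by exact_mod_cast hx
  linarith

theorem exists_subset_hasLargeCommonNbhds (hT : IsTournament T) (hk : 1 ≤ k) (t : ℕ)
    {Q : Finset V} (hdeg : ∀ v ∈ Q, #A ≤ 20 * #{x ∈ A | R v x}) (hQ : 8 ^ k * 40 ^ t ≤ #Q)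
    (hd : 4 ^ (k ^ 2) * (4 * 20 ^ k / 64 ^ k) ^ t * transDensity T k Q < 1) :
    ∃ P ⊆ Q, #Q ≤ 40 ^ t * #P ∧ HasLargeCommonNbhds T R A k P := by
  induction t generalizing Q with
  | zero =>
    rw [pow_zero, mul_one] at hQ hd
    exact absurd (one_le_mul_transDensity hT hQ) hd.not_ge
  | succ t ih =>
    by_cases h : HasLargeCommonNbhds T R A k Q
    · exact ⟨Q, subset_rfl, Nat.le_mul_of_pos_left _ (by positivity), h⟩
    have hQne : Q.Nonempty := card_pos.mp (lt_of_lt_of_le (by positivity) hQ)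
    obtain ⟨x, -, hheavy, hdens⟩ := exists_transDensity_nbhd_le hk hQne hdeg h
    have hsize : 8 ^ k * 40 ^ t ≤ #{v ∈ Q | R v x} := by
      rw [pow_succ, ← mul_assoc] at hQ
      omega
    have hpot : 4 ^ (k ^ 2) * (4 * 20 ^ k / 64 ^ k) ^ t * transDensity T k {v ∈ Q | R v x} < 1 :=
      calc _ ≤ 4 ^ (k ^ 2) * (4 * 20 ^ k / 64 ^ k) ^ t *
              (4 * 20 ^ k / 64 ^ k * transDensity T k Q) := by gcongr
        _ = 4 ^ (k ^ 2) * (4 * 20 ^ k / 64 ^ k) ^ (t + 1) * transDensity T k Q := by ring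
        _ < 1 := hd
    obtain ⟨P, hPQ, hP, hPlarge⟩ := ih (fun v hv => hdeg v (mem_filter.mp hv).1) hsize hpot
    refine ⟨P, hPQ.trans (filter_subset _ _), ?_, hPlarge⟩
    calc #Q ≤ 40 * #{v ∈ Q | R v x} := hheavy
      _ ≤ 40 * (40 ^ t * #P) := Nat.mul_le_mul_left _ hP
      _ = 40 ^ (t + 1) * #P := by ring

end DensityIncrement

section Numerics

variable {k : ℕ}

lemma four_pow_sq_mul_pow_lt_pow (hk : 2 ≤ k) :
    4 ^ (k ^ 2) * (4 * 20 ^ k) ^ (4 * k) < (64 ^ k) ^ (4 * k) := by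
  have hk2 : 2 * k ≤ k ^ 2 := by nlinarith
  calc 4 ^ (k ^ 2) * (4 * 20 ^ k) ^ (4 * k) = 4 ^ (k ^ 2) * 16 ^ (2 * k) * 20 ^ (4 * k ^ 2) := by
        rw [mul_pow, ← pow_mul, show (16 : ℕ) = 4 ^ 2 by rfl, ← pow_mul]; ring
    _ ≤ 4 ^ (k ^ 2) * 16 ^ (k ^ 2) * (20 ^ 4) ^ (k ^ 2) := by
        rw [← pow_mul]; gcongr; norm_num
    _ = 10240000 ^ (k ^ 2) := by rw [← mul_pow, ← mul_pow]; norm_num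
    _ < 16777216 ^ (k ^ 2) := Nat.pow_lt_pow_left (by norm_num) (by positivity)
    _ = (64 ^ k) ^ (4 * k) := by
        rw [← pow_mul, show (16777216 : ℕ) = 64 ^ 4 by rfl, ← pow_mul]; ring_nf

lemma forty_pow_mul_lt_two_pow (hk : 2 ≤ k) :
    (40 ^ (4 * k)) ^ k * 4 ^ (k ^ 2) * 64 ^ k < 2 ^ (30 * k ^ 2) := by
  have h64 : ∀ n, (64 : ℕ) ^ n = 2 ^ (6 * n) := fun n => by rw [pow_mul]; norm_num
  have h4 : ∀ n, (4 : ℕ) ^ n = 2 ^ (2 * n) := fun n => by rw [pow_mul]; norm_num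
  calc (40 ^ (4 * k)) ^ k * 4 ^ (k ^ 2) * 64 ^ k ≤ (64 ^ (4 * k)) ^ k * 4 ^ (k ^ 2) * 64 ^ k := by
        gcongr; norm_num
    _ = 2 ^ (26 * k ^ 2 + 6 * k) := by
        rw [h64, h64, h4, ← pow_mul, ← pow_add, ← pow_add]; ring_nf
    _ < 2 ^ (30 * k ^ 2) := Nat.pow_lt_pow_right (by norm_num) (by nlinarith)

lemma eight_pow_mul_forty_pow_le (k : ℕ) : 8 ^ k * 40 ^ (4 * k) ≤ 2 ^ (30 * k) :=
  calc 8 ^ k * 40 ^ (4 * k) ≤ 8 ^ k * 64 ^ (4 * k) := by gcongr; norm_num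
    _ = 2 ^ (27 * k) := by
        rw [show (8 : ℕ) = 2 ^ 3 by rfl, show (64 : ℕ) = 2 ^ 6 by rfl, ← pow_mul, ← pow_mul,
          ← pow_add]; ring_nf
    _ ≤ 2 ^ (30 * k) := Nat.pow_le_pow_right (by norm_num) (by omega)

end Numerics

section Counting

variable {V : Type*} {T R : V → V → Prop} {A S : Finset V} {k : ℕ}

lemma card_le_card_heads_one (hdeg : ∀ v ∈ S, #A ≤ 20 * #{x ∈ A | R v x}) :
    #S ≤ #(heads T R A 1 S) := by
  refine card_le_card_of_injOn (fun v => {v}) (fun v hv => ?_) (singleton_injective.injOn)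
  have hcommon : commonNbhd R A {v} = {x ∈ A | R v x} := by simp [commonNbhd]
  refine mem_filter.mpr
    ⟨mem_transSubsets.mpr ⟨singleton_subset_iff.mpr hv, card_singleton v, ?_⟩, ?_⟩
  · intro a ha b hb c hc hab _
    rw [mem_singleton] at ha hb hc
    subst ha hb hc
    exact hab
  · rw [hcommon]
    have := hdeg v hv
    omega

lemma pow_card_le_mul_card_heads (hT : IsTournament T) (hk : 2 ≤ k) (hS : 2 ^ (30 * k) ≤ #S)
    (hdeg : ∀ v ∈ S, #A ≤ 20 * #{x ∈ A | R v x}) :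
    #S ^ k ≤ (40 ^ (4 * k)) ^ k * 4 ^ (k ^ 2) * 64 ^ k * #(heads T R A k S) := by
  have hsize := (eight_pow_mul_forty_pow_le k).trans hS
  have hpot : 4 ^ (k ^ 2) * (4 * 20 ^ k / 64 ^ k) ^ (4 * k) * transDensity T k S < (1 : ℝ) :=
    calc _ ≤ 4 ^ (k ^ 2) * (4 * 20 ^ k / 64 ^ k) ^ (4 * k) * (1 : ℝ) := by
          gcongr; exact transDensity_le_one S
      _ < 1 := by
          rw [mul_one, div_pow, ← mul_div_assoc, div_lt_one (by positivity)]
          exact_mod_cast four_pow_sq_mul_pow_lt_pow hk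
  obtain ⟨P, hPS, hSP, hP⟩ :=
    exists_subset_hasLargeCommonNbhds hT (by omega) (4 * k) hdeg hsize hpot
  have hP8 : 8 ^ k ≤ #P := by
    refine Nat.le_of_mul_le_mul_right (c := 40 ^ (4 * k)) ?_ (by positivity)
    linarith
  calc #S ^ k ≤ (40 ^ (4 * k) * #P) ^ k := Nat.pow_le_pow_left hSP k
    _ = (40 ^ (4 * k)) ^ k * #P ^ k := mul_pow _ _ _
    _ ≤ (40 ^ (4 * k)) ^ k * (4 ^ (k ^ 2) * (64 ^ k * #(heads T R A k S))) := by
        gcongr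
        refine (pow_card_le_card_transSubsets hT k P hP8).trans (Nat.mul_le_mul_left _ ?_)
        exact (card_transSubsets_le_card_heads hP).trans
          (Nat.mul_le_mul_left _ (card_le_card (heads_mono hPS)))
    _ = _ := by ring

theorem choose_lt_mul_card_heads (hT : IsTournament T) (hk : 1 ≤ k) (hS : 2 ^ (30 * k) ≤ #S)
    (hdeg : ∀ v ∈ S, #A ≤ 20 * #{x ∈ A | R v x}) :
    (#S).choose k < 2 ^ (30 * k ^ 2) * #(heads T R A k S) := by
  have hS0 : 0 < #S := Nat.one_le_two_pow.trans hS
  obtain rfl | hk2 := hk.eq_or_lt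
  -- for `k = 1` the density drop `4 (20/64)^k` exceeds `1`, but every singleton is a head
  · rw [Nat.choose_one_right]
    calc #S < 2 ^ (30 * 1 ^ 2) * #S := by omega
      _ ≤ _ := Nat.mul_le_mul_left _ (card_le_card_heads_one hdeg)
  have hbound := pow_card_le_mul_card_heads hT hk2 hS hdeg
  have hpos : 0 < #(heads T R A k S) := by
    by_contra! h0
    have := pow_pos hS0 k
    simp_all
  calc (#S).choose k ≤ #S ^ k := Nat.choose_le_pow _ _
    _ ≤ _ := hbound
    _ < _ := Nat.mul_lt_mul_of_pos_right (forty_pow_mul_lt_two_pow hk2) hpos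

lemma ncard_setOf_mem_and (A : Finset V) (p : V → Prop) [DecidablePred p] :
    {a | a ∈ A ∧ p a}.ncard = #{a ∈ A | p a} := by
  rw [← coe_filter, Set.ncard_coe_finset]

lemma mem_heads_iff {H : Finset V} :
    H ∈ heads T R A k S ↔ H ⊆ S ∧ #H = k ∧ TransOn T H ∧
      (#A : ℝ) / 2 ^ (6 * k) ≤ ({a | a ∈ A ∧ ∀ s ∈ H, R s a}.ncard : ℝ) := by
  have h64 : (2 : ℝ) ^ (6 * k) = 64 ^ k := by rw [pow_mul]; norm_num
  rw [heads, mem_filter, mem_transSubsets, ncard_setOf_mem_and, h64, div_le_iff₀ (by positivity),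
    mul_comm, commonNbhd]
  norm_cast
  simp only [and_assoc]

lemma choose_div_lt_card_heads (hT : IsTournament T) (hk : 1 ≤ k) (hS : 2 ^ (30 * k) ≤ #S)
    (hdeg : ∀ v ∈ S, (#A : ℝ) / 20 ≤ ({a | a ∈ A ∧ R v a}.ncard : ℝ)) :
    ((#S).choose k : ℝ) / 2 ^ (30 * k ^ 2) < #(heads T R A k S) := by
  have hdeg' : ∀ v ∈ S, #A ≤ 20 * #{x ∈ A | R v x} := fun v hv => by
    have := hdeg v hv
    rw [ncard_setOf_mem_and, div_le_iff₀ (by norm_num), mul_comm] at this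
    exact_mod_cast this
  rw [div_lt_iff₀ (by positivity), mul_comm]
  exact_mod_cast choose_lt_mul_card_heads hT hk hS hdeg'

end Counting

theorem head_tail_in_dense_sets_general {V : Type*} (T : V → V → Prop)
    (hT : IsTournament T) (k : ℕ) (hk : 1 ≤ k) (A S : Finset V)
    (hS : 2 ^ (30 * k) ≤ S.card) :
    ((∀ v ∈ S, (A.card : ℝ) / 20 ≤ ({a : V | a ∈ A ∧ T v a}.ncard : ℝ)) →
      (∃ H ⊆ S, IsHead T A k H) ∧
      (S.card.choose k : ℝ) / 2 ^ (30 * k ^ 2) <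
        ({H : Finset V | H ⊆ S ∧ IsHead T A k H}.ncard : ℝ)) ∧
    ((∀ v ∈ S, (A.card : ℝ) / 20 ≤ ({a : V | a ∈ A ∧ T a v}.ncard : ℝ)) →
      (∃ H ⊆ S, IsTail T A k H) ∧
      (S.card.choose k : ℝ) / 2 ^ (30 * k ^ 2) <
        ({H : Finset V | H ⊆ S ∧ IsTail T A k H}.ncard : ℝ)) := by
  have key : ∀ (R : V → V → Prop) (P : Finset V → Prop),
      (∀ H, H ∈ heads T R A k S ↔ H ⊆ S ∧ P H) →
      (∀ v ∈ S, (A.card : ℝ) / 20 ≤ ({a : V | a ∈ A ∧ R v a}.ncard : ℝ)) →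
      (∃ H ⊆ S, P H) ∧
        (S.card.choose k : ℝ) / 2 ^ (30 * k ^ 2) < ({H | H ⊆ S ∧ P H}.ncard : ℝ) := by
    intro R P hP hdeg
    have hcount := choose_div_lt_card_heads hT hk hS hdeg
    have hset : {H | H ⊆ S ∧ P H} = heads T R A k S := Set.ext fun H => (hP H).symm
    obtain ⟨H, hH⟩ :=
      card_pos.mp (by exact_mod_cast (by positivity : (0 : ℝ) ≤ _).trans_lt hcount)
    exact ⟨⟨H, (hP H).mp hH⟩, by rwa [hset, Set.ncard_coe_finset]⟩
  exact ⟨key T _ fun _ => mem_heads_iff, key (fun u v => T v u) _ fun _ => mem_heads_iff⟩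

/-- if `|S| ≥ 2^{30k}` and every `v ∈ S` has `d⁺_A(v) ≥ |A|/20` (resp.
`d⁻_A(v) ≥ |A|/20`), then `S` contains an `A`-head (resp. `A`-tail) of size `k`, and more
than a `1/2^{30k²}` fraction of the `k`-element subsets of `S` are `A`-heads (resp.
`A`-tails). -/
theorem head_tail_in_dense_sets {V : Type*} [DecidableEq V] (T : V → V → Prop)
    (hT : IsTournament T) (k : ℕ) (hk : 1 ≤ k) (A S : Finset V)
    (hS : 2 ^ (30 * k) ≤ S.card) :
    ((∀ v ∈ S, (A.card : ℝ) / 20 ≤ ({a : V | a ∈ A ∧ T v a}.ncard : ℝ)) →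
      (∃ H ⊆ S, IsHead T A k H) ∧
      (S.card.choose k : ℝ) / 2 ^ (30 * k ^ 2) <
        ({H : Finset V | H ⊆ S ∧ IsHead T A k H}.ncard : ℝ)) ∧
    ((∀ v ∈ S, (A.card : ℝ) / 20 ≤ ({a : V | a ∈ A ∧ T a v}.ncard : ℝ)) →
      (∃ H ⊆ S, IsTail T A k H) ∧
      (S.card.choose k : ℝ) / 2 ^ (30 * k ^ 2) <
        ({H : Finset V | H ⊆ S ∧ IsTail T A k H}.ncard : ℝ)) :=
  head_tail_in_dense_sets_general T hT k hk A S hS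
end
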